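/- arXiv:1409.2030 — 10 statements merged into one kernel-verified Lean document; each statement's English description precedes it below -/
import Mathlib

section
/- Every quaternion q = a1 + a2*i + a3*j + a4*k is conjugate (congruent) to the complex number a1 + sqrt(a2^2 + a3^2 + a4^2)*i, i.e., there exists a nonzero quaternion w with w q w^{-1} = a1 + sqrt(a2^2+a3^2+a4^2)*i. -/
/-!
Only the imaginary part `p` of `q` has to be moved, onto `v = s i` with `s = |p|`, since real
quaternions are central. Both `p` and `v` are pure of norm `s`, so `p² = -s² = v²`, and in any ring
`u² = v²` gives `(v + u) u = v (v + u)`; hence `w = v + p` conjugates `p` to `v` unless `p = -v`,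
in which case `w = j` does, because `j` anticommutes with `i`.
-/

open Quaternion

theorem semiconjBy_add_of_mul_self_eq {R : Type*} [NonUnitalNonAssocSemiring R] {u v : R}
    (h : u * u = v * v) : SemiconjBy (v + u) u v := by
  rw [SemiconjBy, add_mul, mul_add, h, add_comm]

namespace Quaternion

variable {R : Type*} [CommRing R]

theorem semiconjBy_j_neg_imI (b : R) :
    SemiconjBy (⟨0, 0, 1, 0⟩ : ℍ[R]) (-⟨0, b, 0, 0⟩) ⟨0, b, 0, 0⟩ := by
  ext <;> simp

variable [LinearOrder R] [IsStrictOrderedRing R]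

theorem sq_eq_sq_of_re_eq_zero {a b : ℍ[R]} (ha : a.re = 0) (hb : b.re = 0)
    (h : normSq a = normSq b) : a ^ 2 = b ^ 2 := by
  rw [sq_eq_neg_normSq.2 ha, sq_eq_neg_normSq.2 hb, h]

theorem exists_semiconjBy_mk_imI_of_normSq_eq {a : ℍ[R]} (ha : a.re = 0) (b : R) (h : normSq a = b ^ 2) :
    ∃ w : ℍ[R], w ≠ 0 ∧ SemiconjBy w a ⟨0, b, 0, 0⟩ := by
  have hb : normSq (⟨0, b, 0, 0⟩ : ℍ[R]) = b ^ 2 := (normSq_def' _).trans (by simp)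
  set v : ℍ[R] := ⟨0, b, 0, 0⟩
  by_cases hav : v + a = 0
  · refine ⟨⟨0, 0, 1, 0⟩, fun h1 => one_ne_zero (congrArg (·.imJ) h1), ?_⟩
    rw [eq_neg_of_add_eq_zero_right hav]
    exact semiconjBy_j_neg_imI b
  · have hsq : a * a = v * v := by
      simpa only [sq] using sq_eq_sq_of_re_eq_zero ha rfl (h.trans hb.symm)
    exact ⟨v + a, hav, semiconjBy_add_of_mul_self_eq hsq⟩

end Quaternion

theorem congruent_to_complex (q : ℍ[ℝ]) :
    ∃ w : ℍ[ℝ], w ≠ 0 ∧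
      w * q * w⁻¹ =
        (⟨q.re, Real.sqrt (q.imI ^ 2 + q.imJ ^ 2 + q.imK ^ 2), 0, 0⟩ : ℍ[ℝ]) := by
  set s := Real.sqrt (q.imI ^ 2 + q.imJ ^ 2 + q.imK ^ 2)
  have hnorm : normSq q.im = s ^ 2 := by
    rw [Real.sq_sqrt (by positivity), normSq_def']
    simp
  obtain ⟨w, hw0, hw⟩ := exists_semiconjBy_mk_imI_of_normSq_eq (re_im q) s hnorm
  have hq : SemiconjBy w (q.re + q.im) (q.re + ⟨0, s, 0, 0⟩) :=
    SemiconjBy.add_right (coe_commute q.re w).symm hw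
  have hc : (q.re + ⟨0, s, 0, 0⟩ : ℍ[ℝ]) = ⟨q.re, s, 0, 0⟩ :=
    QuaternionAlgebra.ext (add_zero _) (zero_add _) (add_zero _) (add_zero _)
  rw [re_add_im, hc] at hq
  exact ⟨w, hw0, (mul_inv_eq_iff_eq_mul₀ hw0).2 hq⟩
end

section
/- Let q be a non-real quaternion with trace t(q) = q + conj(q) and norm nu(q) = |q|. Then the set of quaternion roots of the real quadratic polynomial P_q(x) = x^2 - t(q)x + nu(q)^2 is exactly the congruency class [q] of q. -/
/-!
Both `t = q + q̄` and `n = q̄ q` are real, hence central. Conjugation by `w` is a ring automorphism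
fixing them and `q` is a root, so the whole class `[q]` consists of roots. Conversely, a root `x`
satisfies `x (x - q̄) = (x - q̄) q`, so `x ∈ [q]` as soon as `x ≠ q̄`; the remaining root `q̄` is
conjugate to `q` by any nonzero pure quaternion orthogonal to the vector part of `q`, since such a
quaternion anticommutes with that vector part.
-/

open Quaternion

theorem Quaternion.exists_ne_zero_star_mul_eq_mul {R : Type*} [CommRing R] [Nontrivial R]
    (q : ℍ[R]) : ∃ w : ℍ[R], w ≠ 0 ∧ star q * w = w * q := by
  by_cases hIJ : q.imI = 0 ∧ q.imJ = 0
  · refine ⟨(equivProd R).symm (0, 1, 0, 0),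
      fun h => by simpa using congrArg QuaternionAlgebra.imI h, ?_⟩
    ext <;> simp [re_mul, imI_mul, imJ_mul, imK_mul, hIJ.1, hIJ.2]
  · refine ⟨(equivProd R).symm (0, -q.imJ, q.imI, 0), fun h => hIJ ?_, ?_⟩
    · exact ⟨by simpa using congrArg QuaternionAlgebra.imJ h,
        by simpa using congrArg QuaternionAlgebra.imI h⟩
    · ext <;> simp [re_mul, imI_mul, imJ_mul, imK_mul] <;> ring

section Ring

variable {A : Type*} [Ring A]

theorem SemiconjBy.sq_sub_mul_add {w q x t n : A} (h : SemiconjBy w q x) (ht : Commute w t)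
    (hn : Commute w n) : SemiconjBy w (q ^ 2 - t * q + n) (x ^ 2 - t * x + n) :=
  ((h.pow_right 2).sub_right (SemiconjBy.mul_right ht h)).add_right hn

theorem mul_sub_eq_sub_mul_of_sq_sub_add_eq_zero {x q q' : A} (hx : Commute (q + q') x)
    (hroot : x ^ 2 - (q + q') * x + q' * q = 0) : x * (x - q') = (x - q') * q := by
  have hsq : x ^ 2 = (q + q') * x - q' * q := by rw [← sub_eq_zero, ← hroot]; abel
  calc x * (x - q') = x ^ 2 - x * q' := by rw [mul_sub, sq]
    _ = x * (q + q') - q' * q - x * q' := by rw [hsq, hx.eq]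
    _ = (x - q') * q := by noncomm_ring

end Ring

theorem roots_char_poly_eq_congruency_class_general (q : ℍ[ℝ]) :
    {x : ℍ[ℝ] | x ^ 2 - (q + star q) * x + ((‖q‖ ^ 2 : ℝ) : ℍ[ℝ]) = 0} =
      {x : ℍ[ℝ] | ∃ w : ℍ[ℝ], w ≠ 0 ∧ x = w * q * w⁻¹} := by
  have hnorm : ((‖q‖ ^ 2 : ℝ) : ℍ[ℝ]) = star q * q := by
    rw [star_mul_self, sq, normSq_eq_norm_mul_self]
  have htrace : ∀ y : ℍ[ℝ], Commute y (q + star q) := fun y => by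
    rw [self_add_star']; exact (coe_commutes _ y).symm
  ext x
  simp only [Set.mem_ofPred_eq, hnorm]
  constructor
  · intro hroot
    by_cases hx : x = star q
    · obtain ⟨w, hw, hconj⟩ := exists_ne_zero_star_mul_eq_mul q
      exact ⟨w, hw, (eq_mul_inv_iff_mul_eq₀ hw).mpr (hx ▸ hconj)⟩
    · have hw : x - star q ≠ 0 := sub_ne_zero.mpr hx
      exact ⟨x - star q, hw, (eq_mul_inv_iff_mul_eq₀ hw).mpr
        (mul_sub_eq_sub_mul_of_sq_sub_add_eq_zero (htrace x).symm hroot)⟩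
  · rintro ⟨w, hw, rfl⟩
    have hsemi : SemiconjBy w q (w * q * w⁻¹) := by
      rw [SemiconjBy, mul_assoc _ w⁻¹, inv_mul_cancel₀ hw, mul_one]
    have hq : q ^ 2 - (q + star q) * q + star q * q = 0 := by noncomm_ring
    have hconj := (hsemi.sq_sub_mul_add (htrace w) (hnorm ▸ (coe_commutes _ w).symm)).eq
    rw [hq, mul_zero] at hconj
    exact (mul_eq_zero.mp hconj.symm).resolve_right hw

theorem roots_char_poly_eq_congruency_class (q : ℍ[ℝ])
    (hq : ¬ (q.imI = 0 ∧ q.imJ = 0 ∧ q.imK = 0)) :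
    {x : ℍ[ℝ] | x ^ 2 - (q + star q) * x + ((‖q‖ ^ 2 : ℝ) : ℍ[ℝ]) = 0} =
      {x : ℍ[ℝ] | ∃ w : ℍ[ℝ], w ≠ 0 ∧ x = w * q * w⁻¹} :=
  roots_char_poly_eq_congruency_class_general q
end

section
/- Let t ≥ 0 and nu > 0 be real numbers with t^2 - 4*nu^2 < 0. Then the set of quaternion roots of G(x) = x^2 - t*x + nu^2 equals the congruency class of the complex number theta = (t + sqrt(4*nu^2 - t^2)*i)/2. -/
open Quaternion

/-!
Two roots `x`, `θ` of a quadratic `X² - aX + b` with central coefficients satisfy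
`x (x + θ - a) = (x + θ - a) θ`, so `x` is conjugate to `θ` unless `x = a - θ`. Every quaternion
`θ` is a root of `X² - 2 Re(θ) X + |θ|²`, whose exceptional root `2 Re(θ) - θ = θ̄` is `j θ j⁻¹`
when `θ` is complex. Conversely, conjugation fixes central coefficients and so maps roots to roots.
-/

section CentralQuadratic

variable {K R : Type*} [CommSemiring K]

theorem conj_sq_sub_mul_add [DivisionRing R] [Algebra K R] (a b : K) {w : R} (hw : w ≠ 0)
    (θ : R) :
    (w * θ * w⁻¹) ^ 2 - algebraMap K R a * (w * θ * w⁻¹) + algebraMap K R b =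
      w * (θ ^ 2 - algebraMap K R a * θ + algebraMap K R b) * w⁻¹ := by
  have hsq : (w * θ * w⁻¹) ^ 2 = w * θ ^ 2 * w⁻¹ := by
    simp only [sq, mul_assoc, inv_mul_cancel_left₀ hw]
  have ha : algebraMap K R a * (w * θ * w⁻¹) = w * (algebraMap K R a * θ) * w⁻¹ := by
    rw [← mul_assoc, ← mul_assoc, Algebra.commutes, mul_assoc w]
  have hb : algebraMap K R b = w * algebraMap K R b * w⁻¹ := by
    rw [mul_assoc, Algebra.commutes b w⁻¹, mul_inv_cancel_left₀ hw]
  rw [hsq, ha]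
  nth_rewrite 1 [hb]
  noncomm_ring

theorem mul_add_sub_eq_add_sub_mul_of_roots [Ring R] [Algebra K R] {a b : K} {x θ : R}
    (hx : x ^ 2 - algebraMap K R a * x + algebraMap K R b = 0)
    (hθ : θ ^ 2 - algebraMap K R a * θ + algebraMap K R b = 0) :
    x * (x + θ - algebraMap K R a) = (x + θ - algebraMap K R a) * θ := by
  rw [← sub_eq_zero, ← sub_eq_zero.mpr (hx.trans hθ.symm), Algebra.commutes a x]
  noncomm_ring

theorem roots_eq_conjugates_of_exists_conj_eq_sub [DivisionRing R] [Algebra K R] {a b : K} {θ : R}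
    (hθ : θ ^ 2 - algebraMap K R a * θ + algebraMap K R b = 0)
    (hconj : ∃ w : R, w ≠ 0 ∧ algebraMap K R a - θ = w * θ * w⁻¹) :
    {x : R | x ^ 2 - algebraMap K R a * x + algebraMap K R b = 0} =
      {x : R | ∃ w : R, w ≠ 0 ∧ x = w * θ * w⁻¹} := by
  ext x
  constructor
  · intro hx
    by_cases hw : x + θ - algebraMap K R a = 0
    · have hx_eq : x = algebraMap K R a - θ := by rw [← sub_eq_zero, ← hw]; abel
      rwa [hx_eq]
    · refine ⟨_, hw, ?_⟩
      rw [← mul_add_sub_eq_add_sub_mul_of_roots hx hθ, mul_inv_cancel_right₀ hw]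
  · rintro ⟨w, hw, rfl⟩
    simp only [Set.mem_ofPred_eq, conj_sq_sub_mul_add a b hw, hθ, mul_zero, zero_mul]

end CentralQuadratic

namespace Quaternion

theorem sq_sub_two_re_mul_add_normSq (θ : ℍ[ℝ]) :
    θ ^ 2 - ((2 * θ.re : ℝ) : ℍ[ℝ]) * θ + ((normSq θ : ℝ) : ℍ[ℝ]) = 0 := by
  rw [← self_add_star', ← star_mul_self]
  noncomm_ring

theorem exists_star_eq_conj_of_imJ_eq_zero_of_imK_eq_zero {θ : ℍ[ℝ]} (hJ : θ.imJ = 0)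
    (hK : θ.imK = 0) : ∃ w : ℍ[ℝ], w ≠ 0 ∧ star θ = w * θ * w⁻¹ := by
  obtain ⟨j, hj_re, hj_imI, hj_imJ, hj_imK⟩ :
      ∃ j : ℍ[ℝ], j.re = 0 ∧ j.imI = 0 ∧ j.imJ = 1 ∧ j.imK = 0 := ⟨⟨0, 0, 1, 0⟩, rfl, rfl, rfl, rfl⟩
  have hj : j ≠ 0 := fun h ↦ by simp [h] at hj_imJ
  have hjθ : star θ * j = j * θ := by ext <;> simp [hj_re, hj_imI, hj_imJ, hj_imK, hJ, hK]
  exact ⟨j, hj, by rw [← hjθ, mul_inv_cancel_right₀ hj]⟩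

end Quaternion

theorem roots_real_quadratic_eq_congruency_class_general (t ν : ℝ)
    (hdisc : t ^ 2 - 4 * ν ^ 2 < 0)
    (θ : ℍ[ℝ]) (hθ : θ = ⟨t / 2, Real.sqrt (4 * ν ^ 2 - t ^ 2) / 2, 0, 0⟩) :
    {x : ℍ[ℝ] | x ^ 2 - (t : ℍ[ℝ]) * x + ((ν ^ 2 : ℝ) : ℍ[ℝ]) = 0} =
      {x : ℍ[ℝ] | ∃ w : ℍ[ℝ], w ≠ 0 ∧ x = w * θ * w⁻¹} := by
  have hsqrt : Real.sqrt (4 * ν ^ 2 - t ^ 2) ^ 2 = 4 * ν ^ 2 - t ^ 2 := Real.sq_sqrt (by linarith)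
  have hre : 2 * θ.re = t := by rw [hθ]; ring
  have hnormSq : normSq θ = ν ^ 2 := by
    rw [normSq_def', hθ]
    linear_combination hsqrt / 4
  have hroot := sq_sub_two_re_mul_add_normSq θ
  rw [hre, hnormSq] at hroot
  have hstar : (t : ℍ[ℝ]) - θ = star θ := by rw [← hre, ← self_add_star', add_sub_cancel_left]
  obtain ⟨w, hw, hconj⟩ := exists_star_eq_conj_of_imJ_eq_zero_of_imK_eq_zero (θ := θ)
    (by rw [hθ]) (by rw [hθ])
  exact roots_eq_conjugates_of_exists_conj_eq_sub (K := ℝ) hroot ⟨w, hw, hstar.trans hconj⟩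

theorem roots_real_quadratic_eq_congruency_class (t ν : ℝ)
    (ht : 0 ≤ t) (hν : 0 < ν) (hdisc : t ^ 2 - 4 * ν ^ 2 < 0)
    (θ : ℍ[ℝ]) (hθ : θ = ⟨t / 2, Real.sqrt (4 * ν ^ 2 - t ^ 2) / 2, 0, 0⟩) :
    {x : ℍ[ℝ] | x ^ 2 - (t : ℍ[ℝ]) * x + ((ν ^ 2 : ℝ) : ℍ[ℝ]) = 0} =
      {x : ℍ[ℝ] | ∃ w : ℍ[ℝ], w ≠ 0 ∧ x = w * θ * w⁻¹} :=
  roots_real_quadratic_eq_congruency_class_general t ν hdisc θ hθ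
end

section
/- The quaternion j is the unique quaternion root of P(x) = x^2 - (i+j)x + k: if q is a quaternion with q^2 - (i+j)q + k = 0, then q = j. -/
/-!
Over any ring, `x² - (a + b)x + ab = (x - b)x - a(x - b)`, so a root `x ≠ b` satisfies
`w x = a w` for `w = x - b ≠ 0`: `x` is conjugate to `a = i`, hence `x² = -1 = j²`.
Comparing `P(x) = 0` with `P(j) = 0` then gives `(i + j)x = (i + j)j`, and `i + j ≠ 0`.
-/

open Quaternion

section SquareRootsOfNegOne

variable {R : Type*} [Ring R]

theorem sq_sub_add_mul_add_mul (a b x : R) :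
    x ^ 2 - (a + b) * x + a * b = (x - b) * x - a * (x - b) := by
  noncomm_ring

theorem sq_eq_neg_one_of_mul_eq_mul [NoZeroDivisors R] {a w x : R} (hw : w ≠ 0)
    (hwx : w * x = a * w) (ha : a ^ 2 = -1) : x ^ 2 = -1 := by
  have hsq : w * x ^ 2 = w * -1 := by
    rw [SemiconjBy.pow_right hwx 2, ha, neg_one_mul, mul_neg_one]
  exact mul_left_cancel₀ hw hsq

theorem eq_of_sq_sub_add_mul_add_mul_eq_zero [NoZeroDivisors R] {a b x : R}
    (ha : a ^ 2 = -1) (hb : b ^ 2 = -1) (hab : a + b ≠ 0)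
    (hx : x ^ 2 - (a + b) * x + a * b = 0) : x = b := by
  by_contra hxb
  have hconj : (x - b) * x = a * (x - b) := by
    rwa [sq_sub_add_mul_add_mul, sub_eq_zero] at hx
  have hx2 : x ^ 2 = -1 := sq_eq_neg_one_of_mul_eq_mul (sub_ne_zero.mpr hxb) hconj ha
  have hlin : x ^ 2 + a * b = (a + b) * x := by
    rw [← sub_eq_zero, ← hx]; noncomm_ring
  refine hxb (mul_left_cancel₀ hab ?_)
  calc (a + b) * x = b ^ 2 + a * b := by rw [← hlin, hx2, hb]
    _ = (a + b) * b := by noncomm_ring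

end SquareRootsOfNegOne

theorem j_is_unique_root (q i j k : ℍ[ℝ])
    (hi : i = ⟨0, 1, 0, 0⟩) (hj : j = ⟨0, 0, 1, 0⟩) (hk : k = ⟨0, 0, 0, 1⟩)
    (hq : q ^ 2 - (i + j) * q + k = 0) :
    q = j := by
  have hij : k = i * j := by
    ext <;> simp only [re_mul, imI_mul, imJ_mul, imK_mul] <;> simp [hi, hj, hk]
  rw [hij] at hq
  refine eq_of_sq_sub_add_mul_add_mul_eq_zero ?_ ?_ ?_ hq
  · ext <;> simp only [sq, re_mul, imI_mul, imJ_mul, imK_mul] <;> simp [hi]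
  · ext <;> simp only [sq, re_mul, imI_mul, imJ_mul, imK_mul] <;> simp [hj]
  · intro h
    have := congrArg (·.imI) h
    simp only [imI_add, imI_zero] at this
    simp [hi, hj] at this
end

section
/- Let P(x) = x^2 + bx + c with quaternion coefficients and Pbar(x) = x^2 + conj(b)x + conj(c). If theta is a complex number with F(theta) = P(theta)Pbar(theta) = 0 and both Pbar(theta) = 0 and Pbar(conj(theta)) = 0, then P(theta) = 0 and P(conj(theta)) = 0. In particular if theta is real then P(theta) = 0. -/
open Quaternion

theorem both_conjugates_roots (b c θ : ℍ[ℝ])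
    (hθ : θ.imJ = 0 ∧ θ.imK = 0)
    (hF : (θ ^ 2 + b * θ + c) * (θ ^ 2 + star b * θ + star c) = 0)
    (h1 : θ ^ 2 + star b * θ + star c = 0)
    (h2 : (star θ) ^ 2 + star b * (star θ) + star c = 0) :
    (θ ^ 2 + b * θ + c = 0 ∧ (star θ) ^ 2 + b * (star θ) + c = 0) ∧
      (θ.imI = 0 → θ ^ 2 + b * θ + c = 0) := by
  obtain ⟨hJ, hK⟩ := hθ
  -- star of h2 and h1
  have hs2 : θ ^ 2 + θ * b + c = 0 := by
    have := congrArg star h2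
    simpa [pow_two, star_mul, mul_assoc] using this
  have hs1 : (star θ) ^ 2 + star θ * b + c = 0 := by
    have := congrArg star h1
    simpa [pow_two, star_mul, mul_assoc] using this
  have hcomm : b * θ = θ * b ∧ b * star θ = star θ * b := by
    by_cases hI : θ.imI = 0
    · have hreal : star θ = θ := by ext <;> simp [hI, hJ, hK]
      have hcoe : θ = ((θ.re : ℝ) : ℍ[ℝ]) := by ext <;> simp [hI, hJ, hK]
      rw [hreal, hcoe]
      constructor <;> exact (Quaternion.coe_commutes θ.re b).symm
    · -- key factorization
      have hcs : star θ * θ = θ * star θ := star_comm_self' θ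
      have key : ((θ + star θ) + star b) * (θ - star θ) = 0 := by
        have e : ((θ + star θ) + star b) * (θ - star θ)
            = (θ ^ 2 + star b * θ + star c) - ((star θ) ^ 2 + star b * (star θ) + star c) := by
          simp only [add_mul, mul_sub, pow_two]
          rw [hcs]
          abel
        rw [e, h1, h2, sub_zero]
      have hne : θ - star θ ≠ 0 := by
        intro h
        have := congrArg QuaternionAlgebra.imI h
        simp at this
        exact hI this
      have hb : star b = -(θ + star θ) := by
        rcases mul_eq_zero.mp key with h | h
        · exact eq_neg_of_add_eq_zero_right h
        · exact absurd h hne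
      have hbr : b = ((-(2 * θ.re) : ℝ) : ℍ[ℝ]) := by
        have := congrArg star hb
        rw [star_star] at this
        rw [this]
        ext <;> simp [hJ, hK] <;> ring
      rw [hbr]
      constructor <;> exact Quaternion.coe_commutes _ _
  refine ⟨⟨?_, ?_⟩, fun _ => ?_⟩
  · rw [hcomm.1]; exact hs2
  · rw [hcomm.2]; exact hs1
  · rw [hcomm.1]; exact hs2
end

section
/- Let epsilon ∈ (0,1), P(x) = x^2+bx+c with quaternion coefficients, Pbar its conjugate polynomial and F = P*Pbar. Suppose theta is complex with |F(theta)| ≤ epsilon^2, |Pbar(theta)| < epsilon, and |Pbar(conj(theta))| < epsilon. Then |P(theta)| < sqrt(2)*epsilon and |P(conj(theta))| < sqrt(2)*epsilon. -/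
open Quaternion

lemma key_normSq (b c θ : ℍ[ℝ]) (hJ : θ.imJ = 0) (hK : θ.imK = 0) :
    normSq (θ ^ 2 + b * θ + c) + normSq ((star θ) ^ 2 + b * (star θ) + c) =
    normSq (θ ^ 2 + star b * θ + star c) + normSq ((star θ) ^ 2 + star b * (star θ) + star c) := by
  simp only [Quaternion.normSq_def', pow_two, Quaternion.re_add, Quaternion.imI_add,
    Quaternion.imJ_add, Quaternion.imK_add, Quaternion.re_mul, Quaternion.imI_mul,
    Quaternion.imJ_mul, Quaternion.imK_mul, Quaternion.re_star, Quaternion.imI_star,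
    Quaternion.imJ_star, Quaternion.imK_star, hJ, hK]
  ring

theorem approx_zero_both_small (ε : ℝ) (hε : ε ∈ Set.Ioo (0 : ℝ) 1) (b c θ : ℍ[ℝ])
    (hθ : θ.imJ = 0 ∧ θ.imK = 0)
    (hF : ‖(θ ^ 2 + b * θ + c) * (θ ^ 2 + star b * θ + star c)‖ ≤ ε ^ 2)
    (h1 : ‖θ ^ 2 + star b * θ + star c‖ < ε)
    (h2 : ‖(star θ) ^ 2 + star b * (star θ) + star c‖ < ε) :
    ‖θ ^ 2 + b * θ + c‖ < Real.sqrt 2 * ε ∧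
      ‖(star θ) ^ 2 + b * (star θ) + c‖ < Real.sqrt 2 * ε := by
  obtain ⟨hJ, hK⟩ := hθ
  obtain ⟨hε0, hε1⟩ := hε
  have key := key_normSq b c θ hJ hK
  simp only [Quaternion.normSq_eq_norm_mul_self, ← pow_two] at key
  have hsum : ‖θ ^ 2 + b * θ + c‖ ^ 2 + ‖(star θ) ^ 2 + b * (star θ) + c‖ ^ 2 < 2 * ε ^ 2 := by
    rw [key]
    have a1 : ‖θ ^ 2 + star b * θ + star c‖ ^ 2 < ε ^ 2 :=
      pow_lt_pow_left₀ h1 (norm_nonneg _) (by norm_num)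
    have a2 : ‖(star θ) ^ 2 + star b * (star θ) + star c‖ ^ 2 < ε ^ 2 :=
      pow_lt_pow_left₀ h2 (norm_nonneg _) (by norm_num)
    linarith
  have h2e : (Real.sqrt 2 * ε) ^ 2 = 2 * ε ^ 2 := by
    rw [mul_pow, Real.sq_sqrt (by norm_num)]
  constructor
  · apply lt_of_pow_lt_pow_left₀ 2 (by positivity)
    rw [h2e]
    nlinarith [sq_nonneg ‖(star θ) ^ 2 + b * (star θ) + c‖]
  · apply lt_of_pow_lt_pow_left₀ 2 (by positivity)
    rw [h2e]
    nlinarith [sq_nonneg ‖θ ^ 2 + b * θ + c‖]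
end

section
/- Newton expansion for quaternion quadratics: let P(x) = x^2 + bx + c with quaternion coefficients, xi a root of P, and q a quaternion with P'(q) = 2q + b ≠ 0. Define N(q) = q - P'(q)^{-1}*P(q). Then N(q) = xi + P'(q)^{-1}*(xi - q)^2 - P'(q)^{-1}*(q*xi - xi*q). -/
open Quaternion

theorem newton_expansion (b c ξ q : ℍ[ℝ])
    (hξ : ξ ^ 2 + b * ξ + c = 0) (hq : 2 * q + b ≠ 0) :
    q - (2 * q + b)⁻¹ * (q ^ 2 + b * q + c) =
      ξ + (2 * q + b)⁻¹ * (ξ - q) ^ 2 - (2 * q + b)⁻¹ * (q * ξ - ξ * q) := by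
  have hc : c = -(ξ ^ 2) - b * ξ := by
    have h : ξ ^ 2 + b * ξ + c = 0 := hξ
    have : c = -(ξ ^ 2 + b * ξ) := eq_neg_of_add_eq_zero_right h
    rw [this]; noncomm_ring
  subst hc
  apply mul_left_cancel₀ hq
  simp only [mul_sub, mul_add, ← mul_assoc, mul_inv_cancel₀ hq, one_mul]
  noncomm_ring
end

section
/- Let P(x) = x^2 + bx + c with quaternion coefficients, xi a root of P, and suppose the quaternion q commutes with xi and P'(q) = 2q + b is invertible. Then the Newton iterate N(q) = q - P'(q)^{-1}P(q) satisfies N(q) - xi = P'(q)^{-1}*(xi - q)^2; in particular |N(q) - xi| ≤ |P'(q)^{-1}| * |q - xi|^2. -/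
open Quaternion

theorem newton_commuting_quadratic_convergence (b c ξ q : ℍ[ℝ])
    (hξ : ξ ^ 2 + b * ξ + c = 0) (hcomm : q * ξ = ξ * q) (hq : 2 * q + b ≠ 0) :
    (q - (2 * q + b)⁻¹ * (q ^ 2 + b * q + c)) - ξ = (2 * q + b)⁻¹ * (ξ - q) ^ 2 ∧
      ‖(q - (2 * q + b)⁻¹ * (q ^ 2 + b * q + c)) - ξ‖ ≤ ‖(2 * q + b)⁻¹‖ * ‖q - ξ‖ ^ 2 := by
  have hinv : (2 * q + b) * (2 * q + b)⁻¹ = 1 := mul_inv_cancel₀ hq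
  have hc : c = -(ξ ^ 2 + b * ξ) := eq_neg_of_add_eq_zero_right hξ
  have key : (q - (2 * q + b)⁻¹ * (q ^ 2 + b * q + c)) - ξ = (2 * q + b)⁻¹ * (ξ - q) ^ 2 := by
    apply mul_left_cancel₀ hq
    have expand : (2 * q + b) * ((q - (2 * q + b)⁻¹ * (q ^ 2 + b * q + c)) - ξ)
        = (2 * q + b) * (q - ξ) - ((2 * q + b) * (2 * q + b)⁻¹) * (q ^ 2 + b * q + c) := by
      noncomm_ring
    rw [expand, hinv, one_mul, ← mul_assoc, hinv, one_mul, hc]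
    have hsq : (ξ - q) ^ 2 = ξ ^ 2 - ξ * q - q * ξ + q ^ 2 := by noncomm_ring
    rw [hsq, hcomm]
    noncomm_ring
    rw [hcomm]
    abel
  refine ⟨key, ?_⟩
  rw [key, norm_mul, norm_pow, norm_sub_rev]
end

section
/- Vanishing derivative along commuting directions for Left-Newton: let P(x) = x^2 + bx + c with quaternion coefficients, alpha a root of P with v = 2*alpha + b invertible, and u a quaternion commuting with alpha. Then for real r → 0, the Left-Newton map N_l(q) = q - P'(q)^{-1}P(q) satisfies N_l(alpha + r*u) = alpha + O(r^2); precisely, there exist constants C > 0 and delta > 0 such that for all real r with |r| < delta, |N_l(alpha + r*u) - alpha| ≤ C*r^2. -/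
open Quaternion

theorem left_newton_vanishing_derivative (b c α u : ℍ[ℝ])
    (hα : α ^ 2 + b * α + c = 0) (hv : 2 * α + b ≠ 0)
    (hcomm : u * α = α * u) :
    ∃ C > (0 : ℝ), ∃ δ > (0 : ℝ), ∀ r : ℝ, |r| < δ →
      ‖(α + (r : ℍ[ℝ]) * u -
          (2 * (α + (r : ℍ[ℝ]) * u) + b)⁻¹ *
            ((α + (r : ℍ[ℝ]) * u) ^ 2 + b * (α + (r : ℍ[ℝ]) * u) + c)) - α‖ ≤ C * r ^ 2 := by
  set v : ℍ[ℝ] := 2 * α + b with hvdef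
  have hvnorm : (0 : ℝ) < ‖v‖ := norm_pos_iff.mpr hv
  refine ⟨(2 * ‖u‖ ^ 2 + 1) / ‖v‖, by positivity, ‖v‖ / (2 * (2 * ‖u‖ + 1)), by positivity, ?_⟩
  intro r hr
  set rr : ℍ[ℝ] := (r : ℍ[ℝ]) with hrr
  set s : ℍ[ℝ] := rr * u with hs
  -- s commutes with α
  have hsα : s * α = α * s := by
    rw [hs, mul_assoc, hcomm, ← mul_assoc, hrr, Quaternion.coe_commutes, mul_assoc]
  set w : ℍ[ℝ] := 2 * (α + s) + b with hw
  -- lower bound on ‖w‖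
  have hru : 2 * (|r| * ‖u‖) ≤ ‖v‖ / 2 := by
    rcases le_or_gt ‖u‖ 0 with h | h
    · nlinarith [abs_nonneg r, norm_nonneg u]
    · have h2 : |r| < ‖v‖ / (2 * (2 * ‖u‖ + 1)) := hr
      have h3 : |r| * ‖u‖ < ‖v‖ / (2 * (2 * ‖u‖ + 1)) * ‖u‖ :=
        mul_lt_mul_of_pos_right h2 h
      have hfrac : ‖v‖ / (2 * (2 * ‖u‖ + 1)) * ‖u‖ ≤ ‖v‖ / 4 := by
        rw [div_mul_eq_mul_div, div_le_div_iff₀ (by positivity) (by norm_num)]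
        nlinarith [hvnorm.le]
      nlinarith
  have hsnorm : ‖s‖ ≤ |r| * ‖u‖ := by
    rw [hs, norm_mul, hrr, Quaternion.norm_coe, Real.norm_eq_abs]
  have hwv : w = v + 2 * s := by rw [hw, hvdef]; noncomm_ring
  have hwnorm : ‖v‖ / 2 ≤ ‖w‖ := by
    have h1 : ‖v‖ ≤ ‖v + 2 * s‖ + ‖(2 : ℍ[ℝ]) * s‖ := by
      simpa using norm_sub_le (v + 2 * s) (2 * s)
    have h2 : ‖(2 : ℍ[ℝ]) * s‖ ≤ 2 * (|r| * ‖u‖) := by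
      have h2n : ‖(2 : ℍ[ℝ])‖ = 2 := by
        rw [show (2 : ℍ[ℝ]) = ((2 : ℝ) : ℍ[ℝ]) from by push_cast; rfl,
          Quaternion.norm_coe, Real.norm_eq_abs]
        norm_num
      rw [norm_mul, h2n]
      nlinarith [hsnorm, abs_nonneg r, norm_nonneg u]
    rw [hwv]
    linarith
  have hwne : w ≠ 0 := by
    intro h
    rw [h, norm_zero] at hwnorm
    linarith
  -- key algebraic identity
  have key : w * s - ((α + s) ^ 2 + b * (α + s) + c) = s ^ 2 := by
    have expand : w * s - ((α + s) ^ 2 + b * (α + s) + c) =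
        s ^ 2 + (α * s - s * α) - (α ^ 2 + b * α + c) := by
      rw [hw]; noncomm_ring
    rw [expand, hsα, hα]; simp
  have hX : α + rr * u - w⁻¹ * ((α + s) ^ 2 + b * (α + s) + c) - α
      = w⁻¹ * (s ^ 2) := by
    rw [← key, mul_sub, ← mul_assoc, inv_mul_cancel₀ hwne, one_mul, ← hs]
    abel
  have goalrw : α + rr * u -
      (2 * (α + rr * u) + b)⁻¹ * ((α + rr * u) ^ 2 + b * (α + rr * u) + c) - α
      = w⁻¹ * (s ^ 2) := by
    rw [← hX, hw, hs]
  rw [goalrw, norm_mul, norm_inv]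
  have hs2 : ‖s ^ 2‖ ≤ r ^ 2 * ‖u‖ ^ 2 := by
    rw [sq, norm_mul]
    nlinarith [mul_self_le_mul_self (norm_nonneg s) hsnorm, sq_abs r,
      abs_nonneg r, norm_nonneg u]
  have hinv : ‖w‖⁻¹ ≤ 2 / ‖v‖ := by
    rw [inv_le_iff_one_le_mul₀ (lt_of_lt_of_le (by linarith) hwnorm)]
    rw [div_mul_eq_mul_div, le_div_iff₀ hvnorm]
    linarith
  calc ‖w‖⁻¹ * ‖s ^ 2‖ ≤ (2 / ‖v‖) * (r ^ 2 * ‖u‖ ^ 2) :=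
        mul_le_mul hinv hs2 (norm_nonneg _) (by positivity)
    _ = 2 * ‖u‖ ^ 2 / ‖v‖ * r ^ 2 := by ring
    _ ≤ (2 * ‖u‖ ^ 2 + 1) / ‖v‖ * r ^ 2 := by gcongr; linarith
end

section
/- Vanishing derivative along commuting directions for Right-Newton: let P(x) = x^2 + bx + c with quaternion coefficients, alpha a root of P with v = 2*alpha + b invertible, and u a quaternion commuting with alpha + b. Then the Right-Newton map N_r(q) = q - P(q)*P'(q)^{-1} satisfies: there exist C > 0 and delta > 0 such that for all real r with |r| < delta, |N_r(alpha + r*u) - alpha| ≤ C*r^2. -/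
open Quaternion

theorem right_newton_vanishing_derivative (b c α u : ℍ[ℝ])
    (hα : α ^ 2 + b * α + c = 0) (hv : 2 * α + b ≠ 0)
    (hcomm : u * (α + b) = (α + b) * u) :
    ∃ C > (0 : ℝ), ∃ δ > (0 : ℝ), ∀ r : ℝ, |r| < δ →
      ‖(α + (r : ℍ[ℝ]) * u -
          ((α + (r : ℍ[ℝ]) * u) ^ 2 + b * (α + (r : ℍ[ℝ]) * u) + c) *
            (2 * (α + (r : ℍ[ℝ]) * u) + b)⁻¹) - α‖ ≤ C * r ^ 2 := by
  set nv : ℝ := ‖2 * α + b‖ with hnv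
  have hnvpos : 0 < nv := norm_pos_iff.mpr hv
  refine ⟨2 * ‖u‖ ^ 2 / nv + 1, by positivity, nv / (4 * (‖u‖ + 1)), by positivity, ?_⟩
  intro r hr
  set t : ℍ[ℝ] := (r : ℍ[ℝ]) with hts
  set w : ℍ[ℝ] := 2 * (α + t * u) + b with hws
  -- norm of w is bounded below
  have h2n : ‖(2:ℍ[ℝ])‖ = 2 := by
    have h22 : ((2:ℝ):ℍ[ℝ]) = 2 := by norm_cast
    rw [← h22, Quaternion.norm_coe]; norm_num
  have htn : ‖t‖ = |r| := by rw [hts, Quaternion.norm_coe, Real.norm_eq_abs]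
  have hvw : (2 * α + b : ℍ[ℝ]) = w - 2 * (t * u) := by rw [hws]; noncomm_ring
  have hnle : nv ≤ ‖w‖ + 2 * (|r| * ‖u‖) := by
    calc nv = ‖w - 2 * (t * u)‖ := by rw [hnv, hvw]
      _ ≤ ‖w‖ + ‖2 * (t * u)‖ := norm_sub_le _ _
      _ = ‖w‖ + 2 * (|r| * ‖u‖) := by rw [norm_mul, norm_mul, h2n, htn]
  have hrd : |r| < nv / (4 * (‖u‖ + 1)) := hr
  have hru : 2 * (|r| * ‖u‖) ≤ nv / 2 := by
    have h1 : |r| * ‖u‖ ≤ |r| * (‖u‖ + 1) := by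
      have := abs_nonneg r; nlinarith
    have h2 : |r| * (‖u‖ + 1) < nv / (4 * (‖u‖ + 1)) * (‖u‖ + 1) := by
      apply mul_lt_mul_of_pos_right hrd; positivity
    have h3 : nv / (4 * (‖u‖ + 1)) * (‖u‖ + 1) = nv / 4 := by
      field_simp
    nlinarith
  have hwge : nv / 2 ≤ ‖w‖ := by linarith
  have hwpos : 0 < ‖w‖ := lt_of_lt_of_le (by positivity) hwge
  have hne : w ≠ 0 := norm_pos_iff.mp hwpos
  -- commutation facts
  have h4 : u * t = t * u := (Quaternion.coe_commute r u).eq.symm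
  have hta : α * t = t * α := (Quaternion.coe_commute r α).eq.symm
  have htb : b * t = t * b := (Quaternion.coe_commute r b).eq.symm
  have h1c : u * α + u * b = α * u + b * u := by
    have := hcomm
    rw [mul_add, add_mul] at this
    exact this
  have h2c : α * (t * u) = t * (α * u) := by rw [← mul_assoc, hta, mul_assoc]
  have h3c : b * (t * u) = t * (b * u) := by rw [← mul_assoc, htb, mul_assoc]
  -- key expansion
  have key : (α + t * u) ^ 2 + b * (α + t * u) + c
      = t * u * (2 * α + b) + t ^ 2 * u ^ 2 := by
    calc (α + t * u) ^ 2 + b * (α + t * u) + c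
        = (α ^ 2 + b * α + c) + (α * (t * u) + b * (t * u) + t * (u * α))
            + t * (u * (t * u)) := by noncomm_ring
      _ = 0 + (t * (α * u) + t * (b * u) + t * (u * α)) + t * (u * (t * u)) := by
          rw [hα, h2c, h3c]
      _ = t * ((α * u + b * u) + u * α) + t * ((u * t) * u) := by noncomm_ring
      _ = t * ((u * α + u * b) + u * α) + t * ((t * u) * u) := by rw [h1c, h4]
      _ = t * u * (2 * α + b) + t ^ 2 * u ^ 2 := by noncomm_ring
  have hw2 : t * u * w = t * u * (2 * α + b) + 2 * (t ^ 2 * u ^ 2) := by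
    calc t * u * w = t * u * (2 * α + b) + 2 * (t * (u * t) * u) := by
          rw [hws]; noncomm_ring
      _ = t * u * (2 * α + b) + 2 * (t * (t * u) * u) := by rw [h4]
      _ = t * u * (2 * α + b) + 2 * (t ^ 2 * u ^ 2) := by noncomm_ring
  have h5 : t * u * w - ((α + t * u) ^ 2 + b * (α + t * u) + c) = t ^ 2 * u ^ 2 := by
    rw [key, hw2]; noncomm_ring
  have hid : (α + t * u - ((α + t * u) ^ 2 + b * (α + t * u) + c) * w⁻¹) - α
      = t ^ 2 * u ^ 2 * w⁻¹ := by
    have step1 : (α + t * u - ((α + t * u) ^ 2 + b * (α + t * u) + c) * w⁻¹) - α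
        = t * u - ((α + t * u) ^ 2 + b * (α + t * u) + c) * w⁻¹ := by abel
    rw [step1, ← h5, sub_mul, mul_inv_cancel_right₀ hne]
  rw [hid]
  have hnorm : ‖t ^ 2 * u ^ 2 * w⁻¹‖ = r ^ 2 * ‖u‖ ^ 2 * ‖w‖⁻¹ := by
    rw [norm_mul, norm_mul, norm_inv, norm_pow, norm_pow, htn, sq_abs]
  rw [hnorm]
  have hwinv : ‖w‖⁻¹ ≤ 2 / nv := by
    have := inv_anti₀ (by positivity : (0:ℝ) < nv / 2) hwge
    rwa [inv_div] at this
  have hmul : r ^ 2 * ‖u‖ ^ 2 * ‖w‖⁻¹ ≤ r ^ 2 * ‖u‖ ^ 2 * (2 / nv) := by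
    apply mul_le_mul_of_nonneg_left hwinv (by positivity)
  have hfin : r ^ 2 * ‖u‖ ^ 2 * (2 / nv) ≤ (2 * ‖u‖ ^ 2 / nv + 1) * r ^ 2 := by
    have h6 : r ^ 2 * ‖u‖ ^ 2 * (2 / nv) = (2 * ‖u‖ ^ 2 / nv) * r ^ 2 := by
      field_simp
    rw [h6]
    exact mul_le_mul_of_nonneg_right (le_add_of_nonneg_right zero_le_one) (sq_nonneg r)
  linarith
end
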